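/- Let C₁ and C₂ be bounded cochain complexes of finite-dimensional real vector spaces indexed by the natural numbers, both vanishing in degrees ≥ N, and suppose a basis b₁^i of C₁^i and a basis b₂^i of C₂^i have been chosen for each i. Let f₁, f₂ : C₁ → C₂ be chain isomorphisms that are chain homotopic to each other. Then their alternating products of matrix determinants agree: ∏_{i<N} det(M(f₁)^i)^{(-1)^i} = ∏_{i<N} det(M(f₂)^i)^{(-1)^i}, where M(f)^i denotes the matrix of f^i with respect to the bases b₁^i and b₂^i (all these determinants being nonzero). -/

import Mathlib

/-- A cochain complex of real vector spaces indexed by the natural numbers. -/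
structure CochainComplexNat where
  X : ℕ → Type
  [addCommGroup : ∀ i, AddCommGroup (X i)]
  [module : ∀ i, Module ℝ (X i)]
  d : ∀ i, X i →ₗ[ℝ] X (i + 1)
  d_comp_d : ∀ i, (d (i + 1)).comp (d i) = 0

attribute [instance] CochainComplexNat.addCommGroup CochainComplexNat.module

/-- A chain map between ℕ-indexed cochain complexes: a family of linear maps
commuting with the differentials. -/
structure ChainMap (C₁ C₂ : CochainComplexNat) where
  f : ∀ i, C₁.X i →ₗ[ℝ] C₂.X i
  comm : ∀ i, (C₂.d i).comp (f i) = (f (i + 1)).comp (C₁.d i)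

/-- The identity chain map. -/
def ChainMap.id (C : CochainComplexNat) : ChainMap C C where
  f _ := LinearMap.id
  comm _ := by simp

/-- Composition of chain maps. -/
def ChainMap.comp {C₁ C₂ C₃ : CochainComplexNat} (G : ChainMap C₂ C₃) (F : ChainMap C₁ C₂) :
    ChainMap C₁ C₃ where
  f i := (G.f i).comp (F.f i)
  comm i := by
    ext v
    have h₁ := LinearMap.congr_fun (F.comm i) v
    have h₂ := LinearMap.congr_fun (G.comm i) (F.f i v)
    simp only [LinearMap.comp_apply] at h₁ h₂ ⊢
    rw [h₂, h₁]

/-- `Homotopic F G` : there exists a chain homotopy `Φ` from `F` to `G`, i.e. a family of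
linear maps one degree down (with `Φ^0 = 0`, implemented by letting `Φ i : C₁^{i+1} → C₂^i`
play the role of `Φ^{i+1}`) with `G - F = d ∘ Φ + Φ ∘ d` in every degree. -/
def Homotopic {C₁ C₂ : CochainComplexNat} (F G : ChainMap C₁ C₂) : Prop :=
  ∃ Φ : ∀ i, C₁.X (i + 1) →ₗ[ℝ] C₂.X i,
    (G.f 0 - F.f 0 = (Φ 0).comp (C₁.d 0)) ∧
    ∀ i, G.f (i + 1) - F.f (i + 1) = (C₂.d i).comp (Φ i) + (Φ (i + 1)).comp (C₁.d (i + 1))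

/-- A chain map is a homotopy equivalence if it has a chain-homotopy inverse. -/
def IsHomotopyEquiv {C₁ C₂ : CochainComplexNat} (F : ChainMap C₁ C₂) : Prop :=
  ∃ G : ChainMap C₂ C₁,
    Homotopic (G.comp F) (ChainMap.id C₁) ∧ Homotopic (F.comp G) (ChainMap.id C₂)

/-!
Write `F₂ = F₁ ∘ G` with `G := F₁⁻¹ ∘ F₂`; then `G` is homotopic to the identity through
`Φ' := F₁⁻¹ ∘ Φ`, and it suffices to show that the alternating product of `det Gⁱ` is `1`.
Since `d ∘ d = 0`, in degree `i + 1` we have `G = (1 + Φ' d)(1 + d Φ')`, and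
`det (1 + d Φ') = det (1 + Φ' d)` by Sylvester's identity. So with `rᵢ := det (1 + Φ'ᵢ dᵢ)` the
determinants of `G` are `r₀, r₁ r₀, r₂ r₁, …`, the alternating product telescopes to
`r_{N-1}^{±1}`, and `r_{N-1} = 1` because `C₁^N = 0`.
-/

open Finset

theorem prod_range_succ_alternating_zpow_of_eq_mul {G : Type*} [CommGroupWithZero G]
    (a r : ℕ → G) (h₀ : a 0 = r 0) (h_succ : ∀ i, a (i + 1) = r (i + 1) * r i)
    (ha : ∀ i, a i ≠ 0) (n : ℕ) :
    ∏ i ∈ range (n + 1), a i ^ ((-1 : ℤ) ^ i) = r n ^ ((-1 : ℤ) ^ n) := by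
  induction n with
  | zero => simp [h₀]
  | succ n ih =>
    have hr : r n ≠ 0 := right_ne_zero_of_mul (h_succ n ▸ ha (n + 1))
    rw [prod_range_succ, ih, h_succ, mul_zpow, mul_left_comm, ← zpow_add₀ hr, pow_succ,
      mul_neg_one, add_neg_cancel, zpow_zero, mul_one]

theorem LinearMap.det_one_add_comp_comm {R V W : Type*} [CommRing R]
    [AddCommGroup V] [Module R V] [Module.Free R V] [Module.Finite R V]
    [AddCommGroup W] [Module R W] [Module.Free R W] [Module.Finite R W]
    (f : V →ₗ[R] W) (g : W →ₗ[R] V) :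
    LinearMap.det (1 + f ∘ₗ g) = LinearMap.det (1 + g ∘ₗ f) := by
  classical
  let bV := Module.Free.chooseBasis R V
  let bW := Module.Free.chooseBasis R W
  rw [← LinearMap.det_toMatrix bW, ← LinearMap.det_toMatrix bV, map_add, map_add,
    LinearMap.toMatrix_one, LinearMap.toMatrix_one, LinearMap.toMatrix_comp bW bV bW,
    LinearMap.toMatrix_comp bV bW bV, Matrix.det_one_add_mul_comm]

theorem LinearMap.det_one_add_comp_add_comp_of_comp_eq_zero {R U V W : Type*} [CommRing R]
    [AddCommGroup U] [Module R U] [Module.Free R U] [Module.Finite R U]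
    [AddCommGroup V] [Module R V] [Module.Free R V] [Module.Finite R V]
    [AddCommGroup W] [Module R W]
    (d : U →ₗ[R] V) (d' : V →ₗ[R] W) (Φ : V →ₗ[R] U) (Φ' : W →ₗ[R] V) (hd : d' ∘ₗ d = 0) :
    LinearMap.det (1 + d ∘ₗ Φ + Φ' ∘ₗ d') =
      LinearMap.det (1 + Φ' ∘ₗ d') * LinearMap.det (1 + Φ ∘ₗ d) := by
  have h_vanish : (Φ' ∘ₗ d') ∘ₗ (d ∘ₗ Φ) = 0 := by
    rw [LinearMap.comp_assoc, ← LinearMap.comp_assoc Φ d d', hd, LinearMap.zero_comp,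
      LinearMap.comp_zero]
  have h_factor : 1 + d ∘ₗ Φ + Φ' ∘ₗ d' = (1 + Φ' ∘ₗ d') ∘ₗ (1 + d ∘ₗ Φ) := by
    rw [LinearMap.comp_add, LinearMap.add_comp, LinearMap.add_comp, h_vanish]
    simp only [Module.End.one_eq_id, LinearMap.comp_id, LinearMap.id_comp]
    abel
  rw [h_factor, LinearMap.det_comp, LinearMap.det_one_add_comp_comm d Φ]

theorem ChainMap.alternating_det_eq_one_of_homotopic_id {C : CochainComplexNat}
    [∀ i, FiniteDimensional ℝ (C.X i)] {N : ℕ} [Subsingleton (C.X N)] {G : ChainMap C C}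
    (hG : ∀ i, Function.Bijective (G.f i)) (h : Homotopic (ChainMap.id C) G) :
    ∏ i ∈ range N, LinearMap.det (G.f i) ^ ((-1 : ℤ) ^ i) = 1 := by
  obtain ⟨Φ, h₀, h_succ⟩ := h
  cases N with
  | zero => simp
  | succ n =>
    have hΦd : Φ n ∘ₗ C.d n = 0 := by
      ext v
      simp [Subsingleton.elim (C.d n v) 0]
    rw [prod_range_succ_alternating_zpow_of_eq_mul _ (fun i => LinearMap.det (1 + Φ i ∘ₗ C.d i))
      ?_ ?_ (fun i => (LinearMap.isUnit_det _ ((Module.End.isUnit_iff _).2 (hG i))).ne_zero),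
      hΦd, add_zero, map_one, one_zpow]
    · rw [eq_add_of_sub_eq' h₀]
      rfl
    · intro i
      rw [eq_add_of_sub_eq' (h_succ i), ← add_assoc]
      exact LinearMap.det_one_add_comp_add_comp_of_comp_eq_zero _ _ _ _ (C.d_comp_d i)

noncomputable def ChainMap.inv {C₁ C₂ : CochainComplexNat} (F : ChainMap C₁ C₂)
    (hF : ∀ i, Function.Bijective (F.f i)) : ChainMap C₂ C₁ where
  f i := (LinearEquiv.ofBijective (F.f i) (hF i)).symm.toLinearMap
  comm i := by
    ext v
    apply (hF (i + 1)).injective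
    simpa using
      (LinearMap.congr_fun (F.comm i) ((LinearEquiv.ofBijective (F.f i) (hF i)).symm v)).symm

theorem ChainMap.inv_comp_self {C₁ C₂ : CochainComplexNat} (F : ChainMap C₁ C₂)
    (hF : ∀ i, Function.Bijective (F.f i)) : (F.inv hF).comp F = ChainMap.id C₁ := by
  simp only [ChainMap.comp, ChainMap.id, ChainMap.inv, ChainMap.mk.injEq]
  funext i
  ext v
  simp

theorem ChainMap.comp_inv_comp {C₁ C₂ : CochainComplexNat} (F : ChainMap C₁ C₂)
    (hF : ∀ i, Function.Bijective (F.f i)) (G : ChainMap C₁ C₂) (i : ℕ) :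
    F.f i ∘ₗ ((F.inv hF).comp G).f i = G.f i := by
  ext v
  simp [ChainMap.comp, ChainMap.inv]

theorem Homotopic.comp_left {C₁ C₂ C₃ : CochainComplexNat} {F G : ChainMap C₁ C₂}
    (h : Homotopic F G) (H : ChainMap C₂ C₃) : Homotopic (H.comp F) (H.comp G) := by
  obtain ⟨Φ, h₀, h_succ⟩ := h
  refine ⟨fun i => H.f i ∘ₗ Φ i, ?_, fun i => ?_⟩
  · change H.f 0 ∘ₗ G.f 0 - H.f 0 ∘ₗ F.f 0 = _
    rw [← LinearMap.comp_sub, h₀, LinearMap.comp_assoc]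
  · change H.f (i + 1) ∘ₗ G.f (i + 1) - H.f (i + 1) ∘ₗ F.f (i + 1) = _
    rw [← LinearMap.comp_sub, h_succ, LinearMap.comp_add, ← LinearMap.comp_assoc, ← H.comm,
      LinearMap.comp_assoc, LinearMap.comp_assoc]

theorem alternating_det_eq_of_homotopic_chain_isos_general
    (C₁ C₂ : CochainComplexNat) (N : ℕ)
    (hbd₁ : ∀ i, N ≤ i → ∀ v : C₁.X i, v = 0)
    (κ : ℕ → Type) [∀ i, Fintype (κ i)] [∀ i, DecidableEq (κ i)]
    (b₁ : ∀ i, Module.Basis (κ i) ℝ (C₁.X i)) (b₂ : ∀ i, Module.Basis (κ i) ℝ (C₂.X i))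
    (F₁ F₂ : ChainMap C₁ C₂)
    (hbij₁ : ∀ i, Function.Bijective (F₁.f i))
    (hbij₂ : ∀ i, Function.Bijective (F₂.f i))
    (hhom : Homotopic F₁ F₂) :
    ∏ i ∈ Finset.range N, (LinearMap.toMatrix (b₁ i) (b₂ i) (F₁.f i)).det ^ ((-1 : ℤ) ^ i) =
      ∏ i ∈ Finset.range N, (LinearMap.toMatrix (b₁ i) (b₂ i) (F₂.f i)).det ^ ((-1 : ℤ) ^ i) := by
  have : ∀ i, FiniteDimensional ℝ (C₁.X i) := fun i => Module.Finite.of_basis (b₁ i)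
  have : Subsingleton (C₁.X N) := subsingleton_of_forall_eq 0 (hbd₁ N le_rfl)
  set G := (F₁.inv hbij₁).comp F₂
  have hG_bij : ∀ i, Function.Bijective (G.f i) := fun i =>
    (LinearEquiv.ofBijective _ (hbij₁ i)).symm.bijective.comp (hbij₂ i)
  have hG_hom : Homotopic (ChainMap.id C₁) G :=
    F₁.inv_comp_self hbij₁ ▸ hhom.comp_left (F₁.inv hbij₁)
  have h_det : ∀ i, (LinearMap.toMatrix (b₁ i) (b₂ i) (F₂.f i)).det =
      (LinearMap.toMatrix (b₁ i) (b₂ i) (F₁.f i)).det * LinearMap.det (G.f i) := fun i => by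
    rw [← F₁.comp_inv_comp hbij₁ F₂ i, LinearMap.toMatrix_comp _ (b₁ i), Matrix.det_mul,
      LinearMap.det_toMatrix]
  simp_rw [h_det, mul_zpow, prod_mul_distrib,
    ChainMap.alternating_det_eq_one_of_homotopic_id hG_bij hG_hom, mul_one]

/-- Let `C₁`, `C₂` be bounded cochain complexes of finite-dimensional real
vector spaces vanishing in degrees `≥ N`, with chosen bases `b₁ i`, `b₂ i` in each degree.
If `F₁, F₂ : C₁ → C₂` are chain isomorphisms that are chain homotopic to each other, then
their alternating products of matrix determinants agree:
`∏_{i<N} det(M(F₁)^i)^{(-1)^i} = ∏_{i<N} det(M(F₂)^i)^{(-1)^i}`. -/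
theorem alternating_det_eq_of_homotopic_chain_isos
    (C₁ C₂ : CochainComplexNat) (N : ℕ)
    (hbd₁ : ∀ i, N ≤ i → ∀ v : C₁.X i, v = 0)
    (hbd₂ : ∀ i, N ≤ i → ∀ v : C₂.X i, v = 0)
    (κ : ℕ → Type) [∀ i, Fintype (κ i)] [∀ i, DecidableEq (κ i)]
    (b₁ : ∀ i, Module.Basis (κ i) ℝ (C₁.X i)) (b₂ : ∀ i, Module.Basis (κ i) ℝ (C₂.X i))
    (F₁ F₂ : ChainMap C₁ C₂)
    (hbij₁ : ∀ i, Function.Bijective (F₁.f i))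
    (hbij₂ : ∀ i, Function.Bijective (F₂.f i))
    (hhom : Homotopic F₁ F₂) :
    ∏ i ∈ Finset.range N, (LinearMap.toMatrix (b₁ i) (b₂ i) (F₁.f i)).det ^ ((-1 : ℤ) ^ i) =
      ∏ i ∈ Finset.range N, (LinearMap.toMatrix (b₁ i) (b₂ i) (F₂.f i)).det ^ ((-1 : ℤ) ^ i) :=
  alternating_det_eq_of_homotopic_chain_isos_general C₁ C₂ N hbd₁ κ b₁ b₂ F₁ F₂ hbij₁ hbij₂ hhom
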